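/- Update answer sets violate syntax-independence (postulates K6/U4): there are programs P_1, P_2, P_2' with P_2 ≡ P_2' (same belief sets) but Bel((P_1,P_2)) ≠ Bel((P_1,P_2')). Witness: P_1 = { a ←, b ← }, P_2 = { ¬a ← b }, P_2' = { ¬b ← a }; then {¬a, b} is an update answer set of (P_1,P_2) but not of (P_1,P_2'). -/

import Mathlib

/-- A literal over atoms `α`: an atom or a strongly negated atom. -/
inductive Lit (α : Type) where
  | pos : α → Lit α
  | neg : α → Lit α

/-- The complementary literal. -/
def Lit.compl {α : Type} : Lit α → Lit α
  | .pos a => .neg a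
  | .neg a => .pos a

/-- A rule of an extended logic program: optional head literal,
prerequisites `prem`, and weakly negated body literals `nbody`. -/
structure Rule (α : Type) where
  head : Option (Lit α)
  prem : Set (Lit α)
  nbody : Set (Lit α)

/-- A set of literals is consistent iff it contains no complementary pair. -/
def Consistent {α : Type} (S : Set (Lit α)) : Prop :=
  ∀ a : α, ¬ (Lit.pos a ∈ S ∧ Lit.neg a ∈ S)

/-- The body of `r` is true in `S`. -/
def BodyTrue {α : Type} (S : Set (Lit α)) (r : Rule α) : Prop :=
  r.prem ⊆ S ∧ ∀ L ∈ r.nbody, L ∉ S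

/-- The head of `r` is true in `S` (false for constraints). -/
def HeadTrue {α : Type} (S : Set (Lit α)) (r : Rule α) : Prop :=
  ∃ L, r.head = some L ∧ L ∈ S

/-- Rule `r` is true in `S`. -/
def RuleTrue {α : Type} (S : Set (Lit α)) (r : Rule α) : Prop :=
  BodyTrue S r → HeadTrue S r

/-- `S` is a model of program `P`. -/
def IsModel {α : Type} (S : Set (Lit α)) (P : Set (Rule α)) : Prop :=
  ∀ r ∈ P, RuleTrue S r

/-- `r` is defeated by `S`. -/
def Defeated {α : Type} (S : Set (Lit α)) (r : Rule α) : Prop :=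
  ∃ L ∈ r.nbody, L ∈ S

/-- The Gelfond–Lifschitz reduct of `P` relative to `S`. -/
def Reduct {α : Type} (P : Set (Rule α)) (S : Set (Lit α)) : Set (Rule α) :=
  { r' | ∃ r ∈ P, ¬ Defeated S r ∧ r' = Rule.mk r.head r.prem ∅ }

/-- `S` is an answer set of `P`: a consistent set of literals that is a
minimal model of the reduct `P^S`. -/
def IsAnswerSet {α : Type} (P : Set (Rule α)) (S : Set (Lit α)) : Prop :=
  Consistent S ∧ IsModel S (Reduct P S) ∧
    ∀ T ⊆ S, IsModel T (Reduct P S) → T = S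

/-- The belief set of `P`: all rules true in every answer set of `P`. -/
def Bel {α : Type} (P : Set (Rule α)) : Set (Rule α) :=
  { r | ∀ S, IsAnswerSet P S → RuleTrue S r }
/-- Extended alphabet `At*`: original atoms, indexed copies `A_i`,
and rejection atoms `rej(r)` for (named copies of) rules. -/
inductive ExtAtom (α : Type) where
  | base : α → ExtAtom α
  | idx : ℕ → α → ExtAtom α
  | rej : ℕ → Rule α → ExtAtom α

/-- Lift a literal over `α` to the corresponding literal over `At*`. -/
def liftLit {α : Type} : Lit α → Lit (ExtAtom α)
  | .pos a => .pos (.base a)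
  | .neg a => .neg (.base a)

/-- The indexed copy `L_i` of a literal `L`. -/
def idxLit {α : Type} (i : ℕ) : Lit α → Lit (ExtAtom α)
  | .pos a => .pos (.idx i a)
  | .neg a => .neg (.idx i a)

/-- Literal `L` occurs in the update sequence `(P 0, …, P (n-1))`. -/
def OccursIn {α : Type} (n : ℕ) (P : ℕ → Set (Rule α)) (L : Lit α) : Prop :=
  ∃ i < n, ∃ r ∈ P i, r.head = some L ∨ L ∈ r.prem ∨ L ∈ r.nbody

/-- The update program `P_◁` of the update sequence `(P 0, …, P (n-1))`,
an ELP over the extended alphabet `At*`. -/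
def UpdProgram {α : Type} (n : ℕ) (P : ℕ → Set (Rule α)) : Set (Rule (ExtAtom α)) :=
  -- (i) all constraints
  { r' | ∃ i < n, ∃ r ∈ P i, r.head = none ∧
      r' = Rule.mk none (liftLit '' r.prem) (liftLit '' r.nbody) } ∪
  -- (ii)  L_i ← B(r), not rej(r)
  { r' | ∃ i < n, ∃ r ∈ P i, ∃ L, r.head = some L ∧
      r' = Rule.mk (some (idxLit i L)) (liftLit '' r.prem)
             ((liftLit '' r.nbody) ∪ {Lit.pos (ExtAtom.rej i r)}) } ∪
  -- (iii)  rej(r) ← B(r), ¬L_{i+1}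
  { r' | ∃ i, i + 1 < n ∧ ∃ r ∈ P i, ∃ L, r.head = some L ∧
      r' = Rule.mk (some (Lit.pos (ExtAtom.rej i r)))
             ((liftLit '' r.prem) ∪ {idxLit (i+1) L.compl}) (liftLit '' r.nbody) } ∪
  -- (iv) inertia rules  L_i ← L_{i+1}  and  L ← L_1
  { r' | ∃ L, OccursIn n P L ∧
      ((∃ i, i + 1 < n ∧ r' = Rule.mk (some (idxLit i L)) {idxLit (i+1) L} ∅) ∨
        r' = Rule.mk (some (liftLit L)) {idxLit 0 L} ∅) }

/-- `S` is an update answer set of the sequence `(P 0, …, P (n-1))`: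
the restriction to `Lit_At` of an answer set of the update program. -/
def UpdateAnswerSet {α : Type} (n : ℕ) (P : ℕ → Set (Rule α)) (S : Set (Lit α)) : Prop :=
  ∃ S' : Set (Lit (ExtAtom α)), IsAnswerSet (UpdProgram n P) S' ∧
    S = { L | liftLit L ∈ S' }

/-- Two rules are conflicting iff their heads are complementary literals. -/
def Conflicting {α : Type} (r r' : Rule α) : Prop :=
  ∃ L, r.head = some L ∧ r'.head = some L.compl

/-- The founded rejection set at level `i`: rules of `P i` rejected by a
conflicting, itself non-rejected rule of some later program. -/
def RejLevel {α : Type} (n : ℕ) (P : ℕ → Set (Rule α)) (S : Set (Lit α)) (i : ℕ) :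
    Set (Rule α) :=
  { r | r ∈ P i ∧ ∃ j, ∃ _ : i < j, ∃ _ : j < n, ∃ r',
      r' ∈ P j ∧ r' ∉ RejLevel n P S j ∧
      Conflicting r r' ∧ BodyTrue S r ∧ BodyTrue S r' }
  termination_by n - i
  decreasing_by omega

/-- The founded rejection set `Rej(S, P⃗)`. -/
def Rej {α : Type} (n : ℕ) (P : ℕ → Set (Rule α)) (S : Set (Lit α)) : Set (Rule α) :=
  { r | ∃ i < n, r ∈ RejLevel n P S i }

/-- The union `∪P⃗` of all rules of the sequence. -/
def UnionSeq {α : Type} (n : ℕ) (P : ℕ → Set (Rule α)) : Set (Rule α) :=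
  { r | ∃ i < n, r ∈ P i }

/-- The belief set of an update sequence: all rules true in every update
answer set. -/
def BelSeq {α : Type} (n : ℕ) (P : ℕ → Set (Rule α)) : Set (Rule α) :=
  { r | ∀ S, UpdateAnswerSet n P S → RuleTrue S r }

/-- Witness `P_1 = { a ←, b ← }` (atom `a` is `true`, `b` is `false`). -/
def P1w : Set (Rule Bool) :=
  {Rule.mk (some (Lit.pos true)) ∅ ∅, Rule.mk (some (Lit.pos false)) ∅ ∅}

/-- Witness `P_2 = { ¬a ← b }`. -/
def P2w : Set (Rule Bool) :=
  {Rule.mk (some (Lit.neg true)) {Lit.pos false} ∅}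

/-- Witness `P_2' = { ¬b ← a }`. -/
def P2w' : Set (Rule Bool) :=
  {Rule.mk (some (Lit.neg false)) {Lit.pos true} ∅}

/-! Neither `P_2` nor `P_2'` derives anything, since each has a single rule whose premise is
never produced; so both have `∅` as their only answer set and the same beliefs. In an update
program, however, a literal of the original alphabet can only be derived by an inertia rule
`L ← L_0`, so every update answer set consists of literals occurring in the sequence. In
`(P_1, P_2)` the rule `¬a ← b` fires on the inherited `b`, rejects `a ←`, and `¬a` is
inherited down to level `0`, giving the update answer set `{¬a, b}`. But `¬a` does not occur
in `(P_1, P_2')`, so the constraint `← ¬a` is believed after the second update and not after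
the first. -/

open Set

section AnswerSets

variable {α : Type} {P : Set (Rule α)} {S T : Set (Lit α)}

theorem IsModel.head_mem_of_reduct (hT : IsModel T (Reduct P S)) {r : Rule α} (hr : r ∈ P)
    (hnd : ¬ Defeated S r) (hprem : r.prem ⊆ T) {L : Lit α} (hL : r.head = some L) :
    L ∈ T := by
  obtain ⟨M, hM, hMT⟩ := hT _ ⟨r, hr, hnd, rfl⟩ ⟨hprem, by simp⟩
  obtain rfl : L = M := Option.some_injective _ (hL.symm.trans hM)
  exact hMT

theorem IsAnswerSet.exists_support (hS : IsAnswerSet P S) {L : Lit α} (hL : L ∈ S) :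
    ∃ r ∈ P, ¬ Defeated S r ∧ r.head = some L ∧ r.prem ⊆ S \ {L} := by
  by_contra! hunsupported
  suffices hmodel : IsModel (S \ {L}) (Reduct P S) by
    have hLS := hS.2.2 _ sdiff_subset hmodel ▸ hL
    exact hLS.2 rfl
  rintro _ ⟨r, hr, hnd, rfl⟩ ⟨hprem, -⟩
  obtain ⟨M, hM, hMS⟩ := hS.2.1 _ ⟨r, hr, hnd, rfl⟩ ⟨hprem.trans sdiff_subset, by simp⟩
  refine ⟨M, hM, hMS, fun hML => hunsupported r hr hnd ?_ hprem⟩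
  rwa [← mem_singleton_iff.mp hML]

theorem isModel_empty_reduct (hP : ∀ r ∈ P, r.prem.Nonempty) : IsModel ∅ (Reduct P S) := by
  rintro _ ⟨r, hr, -, rfl⟩ ⟨hprem, -⟩
  obtain ⟨L, hL⟩ := hP r hr
  exact absurd (hprem hL) (notMem_empty L)

theorem isAnswerSet_iff_eq_empty (hP : ∀ r ∈ P, r.prem.Nonempty) :
    IsAnswerSet P S ↔ S = ∅ := by
  constructor
  · rintro ⟨-, -, hmin⟩
    exact (hmin ∅ (empty_subset S) (isModel_empty_reduct hP)).symm
  · rintro rfl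
    exact ⟨fun _ h => h.1, isModel_empty_reduct hP, fun _ hT _ => subset_empty_iff.mp hT⟩

theorem bel_eq_of_forall_prem_nonempty (hP : ∀ r ∈ P, r.prem.Nonempty) :
    Bel P = {r | RuleTrue ∅ r} := by
  ext r
  simp only [Bel, mem_ofPred_eq, isAnswerSet_iff_eq_empty hP, forall_eq]

end AnswerSets

section UpdateAnswerSets

variable {α : Type} {n : ℕ} {P Q : ℕ → Set (Rule α)} {L : Lit α}

theorem liftLit_injective : Function.Injective (liftLit : Lit α → Lit (ExtAtom α)) := by
  rintro (_ | _) (_ | _) h <;> simp_all [liftLit]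

theorem idxLit_ne_liftLit (i : ℕ) (L M : Lit α) : idxLit i L ≠ liftLit M := by
  cases L <;> cases M <;> simp [idxLit, liftLit]

/-- Only the inertia rules `L ← L_0` have a head in the original alphabet. -/
theorem occursIn_of_mem_updProgram {r : Rule (ExtAtom α)} (hr : r ∈ UpdProgram n P)
    (hhead : r.head = some (liftLit L)) : OccursIn n P L := by
  rcases hr with ((⟨_, _, _, _, _, rfl⟩ | ⟨i, _, _, _, M, _, rfl⟩) |
    ⟨_, _, _, _, _, _, rfl⟩) | ⟨M, hM, ⟨i, -, rfl⟩ | rfl⟩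
  · cases hhead
  · exact absurd (Option.some_injective _ hhead) (idxLit_ne_liftLit i M L)
  · cases L <;> cases hhead
  · exact absurd (Option.some_injective _ hhead) (idxLit_ne_liftLit i M L)
  · rwa [← liftLit_injective (Option.some_injective _ hhead)]

section Firing

variable {S T : Set (Lit (ExtAtom α))}

theorem IsModel.idxLit_mem_of_updProgram (hT : IsModel T (Reduct (UpdProgram n P) S))
    {i : ℕ} (hi : i < n) {r : Rule α} (hr : r ∈ P i) (hL : r.head = some L)
    (hprem : liftLit '' r.prem ⊆ T) (hnbody : ∀ M ∈ r.nbody, liftLit M ∉ S)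
    (hrej : Lit.pos (ExtAtom.rej i r) ∉ S) : idxLit i L ∈ T := by
  refine hT.head_mem_of_reduct (Or.inl (Or.inl (Or.inr ⟨i, hi, r, hr, L, hL, rfl⟩))) ?_
    hprem rfl
  rintro ⟨_, ⟨M, hM, rfl⟩ | hrejM, hMS⟩
  · exact hnbody M hM hMS
  · exact hrej (mem_singleton_iff.mp hrejM ▸ hMS)

theorem IsModel.rej_mem_of_updProgram (hT : IsModel T (Reduct (UpdProgram n P) S))
    {i : ℕ} (hi : i + 1 < n) {r : Rule α} (hr : r ∈ P i) (hL : r.head = some L)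
    (hprem : liftLit '' r.prem ⊆ T) (hcompl : idxLit (i + 1) L.compl ∈ T)
    (hnbody : ∀ M ∈ r.nbody, liftLit M ∉ S) : Lit.pos (ExtAtom.rej i r) ∈ T := by
  refine hT.head_mem_of_reduct (Or.inl (Or.inr ⟨i, hi, r, hr, L, hL, rfl⟩)) ?_
    (union_subset hprem (singleton_subset_iff.mpr hcompl)) rfl
  rintro ⟨_, ⟨M, hM, rfl⟩, hMS⟩
  exact hnbody M hM hMS

theorem IsModel.idxLit_mem_of_inertia (hT : IsModel T (Reduct (UpdProgram n P) S))
    (hL : OccursIn n P L) {i : ℕ} (hi : i + 1 < n) (hnext : idxLit (i + 1) L ∈ T) :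
    idxLit i L ∈ T :=
  hT.head_mem_of_reduct (Or.inr ⟨L, hL, Or.inl ⟨i, hi, rfl⟩⟩) (by simp [Defeated])
    (singleton_subset_iff.mpr hnext) rfl

theorem IsModel.liftLit_mem_of_inertia (hT : IsModel T (Reduct (UpdProgram n P) S))
    (hL : OccursIn n P L) (h0 : idxLit 0 L ∈ T) : liftLit L ∈ T :=
  hT.head_mem_of_reduct (Or.inr ⟨L, hL, Or.inr rfl⟩) (by simp [Defeated])
    (singleton_subset_iff.mpr h0) rfl

end Firing

variable {S : Set (Lit α)}

theorem UpdateAnswerSet.occursIn (hS : UpdateAnswerSet n P S) (hL : L ∈ S) :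
    OccursIn n P L := by
  obtain ⟨S', hS', rfl⟩ := hS
  obtain ⟨r, hr, -, hhead, -⟩ := hS'.exists_support hL
  exact occursIn_of_mem_updProgram hr hhead

theorem belSeq_ne_of_not_occursIn (hS : UpdateAnswerSet n P S) (hL : L ∈ S)
    (hQ : ¬ OccursIn n Q L) : BelSeq n P ≠ BelSeq n Q := by
  have hnotP : (⟨none, {L}, ∅⟩ : Rule α) ∉ BelSeq n P := fun h => by
    obtain ⟨_, hnone, -⟩ := h S hS ⟨singleton_subset_iff.2 hL, by simp⟩
    cases hnone
  have hmemQ : (⟨none, {L}, ∅⟩ : Rule α) ∈ BelSeq n Q := fun _ hS' hbody =>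
    absurd (hS'.occursIn (hbody.1 rfl)) hQ
  exact fun h => hnotP (h ▸ hmemQ)

end UpdateAnswerSets

def pairSeq {α : Type} (P Q : Set (Rule α)) : ℕ → Set (Rule α) :=
  fun i => if i = 0 then P else Q

@[simp]
theorem pairSeq_zero {α : Type} (P Q : Set (Rule α)) : pairSeq P Q 0 = P := rfl

@[simp]
theorem pairSeq_one {α : Type} (P Q : Set (Rule α)) : pairSeq P Q 1 = Q := rfl

theorem bel_P2w_eq_bel_P2w' : Bel P2w = Bel P2w' := by
  rw [bel_eq_of_forall_prem_nonempty, bel_eq_of_forall_prem_nonempty] <;> simp [P2w, P2w']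

theorem not_occursIn_pairSeq_P1w_P2w'_neg_true :
    ¬ OccursIn 2 (pairSeq P1w P2w') (Lit.neg true) := by
  rintro ⟨i, hi, r, hr, hocc⟩
  interval_cases i
  · rcases hr with rfl | rfl <;> simp at hocc
  · obtain rfl := hr
    simp at hocc

def updWitness : Set (Lit (ExtAtom Bool)) :=
  {.pos (.idx 0 false), .pos (.base false), .neg (.idx 1 true),
    .pos (.rej 0 ⟨some (.pos true), ∅, ∅⟩), .neg (.idx 0 true), .neg (.base true)}

theorem updWitness_consistent : Consistent updWitness := by
  rintro (_ | _ | _) <;> simp only [updWitness, mem_insert_iff, mem_singleton_iff] <;> aesop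

theorem updWitness_isModel :
    IsModel updWitness (Reduct (UpdProgram 2 (pairSeq P1w P2w)) updWitness) := by
  rintro _ ⟨r, hr, hnd, rfl⟩ ⟨hprem, -⟩
  simp only [Defeated, not_exists, not_and] at hnd
  rcases hr with ((⟨i, hi, r, hr, hnone, rfl⟩ | ⟨i, hi, r, hr, L, hL, rfl⟩) |
    ⟨i, hi, r, hr, L, hL, rfl⟩) | ⟨L, -, ⟨i, hi, rfl⟩ | rfl⟩
  · interval_cases i
    · rcases hr with rfl | rfl <;> cases hnone
    · obtain rfl := hr
      cases hnone
  · interval_cases i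
    · rcases hr with rfl | rfl <;> cases hL <;> simp_all [HeadTrue, updWitness, idxLit]
    · obtain rfl := hr
      cases hL
      simp_all [HeadTrue, updWitness, idxLit]
  · obtain rfl : i = 0 := by omega
    rcases hr with rfl | rfl <;> cases hL <;> simp_all [HeadTrue, updWitness, idxLit, Lit.compl]
  · obtain rfl : i = 0 := by omega
    rcases L with (_ | _) <;> simp_all [HeadTrue, updWitness, idxLit]
  · rcases L with (_ | _) <;> simp_all [HeadTrue, updWitness, idxLit, liftLit]

theorem updWitness_minimal (T : Set (Lit (ExtAtom Bool))) (hT : T ⊆ updWitness)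
    (hmodel : IsModel T (Reduct (UpdProgram 2 (pairSeq P1w P2w)) updWitness)) :
    T = updWitness := by
  have hb_occ : OccursIn 2 (pairSeq P1w P2w) (Lit.pos false) :=
    ⟨0, by norm_num, ⟨some (.pos false), ∅, ∅⟩, by simp [P1w], Or.inl rfl⟩
  have hna_occ : OccursIn 2 (pairSeq P1w P2w) (Lit.neg true) :=
    ⟨1, by norm_num, ⟨some (.neg true), {.pos false}, ∅⟩, by simp [P2w], Or.inl rfl⟩
  have hb₀ : idxLit 0 (Lit.pos false) ∈ T :=
    hmodel.idxLit_mem_of_updProgram (r := ⟨some (.pos false), ∅, ∅⟩) (by norm_num)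
      (by simp [P1w]) rfl (by simp) (by simp) (by simp [updWitness])
  have hb : liftLit (Lit.pos false) ∈ T := hmodel.liftLit_mem_of_inertia hb_occ hb₀
  have hna₁ : idxLit 1 (Lit.neg true) ∈ T :=
    hmodel.idxLit_mem_of_updProgram (r := ⟨some (.neg true), {.pos false}, ∅⟩) (by norm_num)
      (by simp [P2w]) rfl (by simpa using hb) (by simp) (by simp [updWitness])
  have hrej : Lit.pos (ExtAtom.rej 0 ⟨some (.pos true), ∅, ∅⟩) ∈ T :=
    hmodel.rej_mem_of_updProgram (by norm_num) (by simp [P1w]) rfl (by simp)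
      hna₁ (by simp)
  have hna₀ : idxLit 0 (Lit.neg true) ∈ T :=
    hmodel.idxLit_mem_of_inertia hna_occ (by norm_num) hna₁
  have hna : liftLit (Lit.neg true) ∈ T := hmodel.liftLit_mem_of_inertia hna_occ hna₀
  refine hT.antisymm ?_
  simp only [updWitness, insert_subset_iff, singleton_subset_iff]
  exact ⟨hb₀, hb, hna₁, hrej, hna₀, hna⟩

theorem updateAnswerSet_pairSeq_P1w_P2w :
    UpdateAnswerSet 2 (pairSeq P1w P2w) {Lit.neg true, Lit.pos false} := by
  refine ⟨updWitness, ⟨updWitness_consistent, updWitness_isModel, updWitness_minimal⟩, ?_⟩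
  ext (b | b) <;> cases b <;> simp [updWitness, liftLit]

/-- syntax-independence (K6/U4) fails: `P_2 ≡ P_2'` (same
belief sets), yet the updated sequences have different belief sets; indeed
`{¬a, b}` is an update answer set of `(P_1,P_2)` but not of `(P_1,P_2')`. -/
theorem k6_u4_fail :
    Bel P2w = Bel P2w' ∧
    UpdateAnswerSet 2 (fun i => if i = 0 then P1w else P2w)
      {Lit.neg true, Lit.pos false} ∧
    ¬ UpdateAnswerSet 2 (fun i => if i = 0 then P1w else P2w')
      {Lit.neg true, Lit.pos false} ∧
    BelSeq 2 (fun i => if i = 0 then P1w else P2w) ≠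
      BelSeq 2 (fun i => if i = 0 then P1w else P2w') :=
  ⟨bel_P2w_eq_bel_P2w', updateAnswerSet_pairSeq_P1w_P2w,
    fun h => not_occursIn_pairSeq_P1w_P2w'_neg_true (h.occursIn (by simp)),
    belSeq_ne_of_not_occursIn updateAnswerSet_pairSeq_P1w_P2w (by simp)
      not_occursIn_pairSeq_P1w_P2w'_neg_true⟩
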